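/- arXiv:math/0202024 — 6 statements merged into one kernel-verified Lean document; each statement's English description precedes it below -/
import Mathlib

section
/- For every integer n ≥ 1, the group Λ̃ₙ is a free abelian group of rank ⌊n/2⌋; more precisely, the images of the basis elements [1], [2], …, [⌊n/2⌋] form a ℤ-basis of Λ̃ₙ. -/
noncomputable section

/-- The basis element `[k]` of the free abelian group `ℤ[ℤ]`. -/
def e (k : ℤ) : ℤ →₀ ℤ := Finsupp.single k 1

/-- The additive subgroup of `ℤ[ℤ]` generated by all `[k] − [k+n]`,
all `[k] − [−k]`, and `[0]`. -/
def lamRel (n : ℕ) : AddSubgroup (ℤ →₀ ℤ) :=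
  AddSubgroup.closure
    ({v | ∃ k : ℤ, v = e k - e (k + n)} ∪ {v | ∃ k : ℤ, v = e k - e (-k)} ∪ {e 0})

/-- The group `Λ̃ₙ`. -/
abbrev LamTilde (n : ℕ) := (ℤ →₀ ℤ) ⧸ lamRel n

namespace LamAux

/-- Folded residue of `k` mod `n`: `min m (n-m)` with `m = k mod n ∈ [0,n)`. -/
def foldN (n : ℕ) (k : ℤ) : ℕ := min (k % (n : ℤ)).toNat (n - (k % (n : ℤ)).toNat)

lemma emod_facts (n : ℕ) (hn : 1 ≤ n) (k : ℤ) :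
    (k % (n : ℤ)).toNat < n ∧ ((k % (n : ℤ)).toNat : ℤ) = k % n := by
  have hn' : (0 : ℤ) < n := by exact_mod_cast hn
  have h1 : 0 ≤ k % (n : ℤ) := Int.emod_nonneg k (by omega)
  have h2 : k % (n : ℤ) < n := Int.emod_lt_of_pos k hn'
  omega

/-- Helper: the basis vector (or zero) attached to a folded residue `m`. -/
def gAux (n m : ℕ) : Fin (n / 2) →₀ ℤ :=
  if h : 0 < m ∧ m ≤ n / 2 then Finsupp.single ⟨m - 1, by omega⟩ 1 else 0

/-- The reduction of the basis vector `[k]`. -/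
def g (n : ℕ) (k : ℤ) : Fin (n / 2) →₀ ℤ := gAux n (foldN n k)

lemma foldN_add (n : ℕ) (k : ℤ) : foldN n (k + n) = foldN n k := by
  have h : (k + (n : ℤ)) % (n : ℤ) = k % (n : ℤ) := by
    simpa using Int.add_mul_emod_self_left (a := k) (b := (n : ℤ)) (c := 1)
  unfold foldN
  rw [h]

lemma foldN_neg (n : ℕ) (hn : 1 ≤ n) (k : ℤ) : foldN n (-k) = foldN n k := by
  obtain ⟨hlt, hcast⟩ := emod_facts n hn k
  obtain ⟨hlt', hcast'⟩ := emod_facts n hn (-k)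
  have hn' : (0 : ℤ) < n := by exact_mod_cast hn
  have h1 : 0 ≤ k % (n : ℤ) := by omega
  have h2 : k % (n : ℤ) < n := by omega
  have h1' : 0 ≤ (-k) % (n : ℤ) := by omega
  have h2' : (-k) % (n : ℤ) < n := by omega
  have hsum0 : ((k % (n : ℤ)) + ((-k) % (n : ℤ))) % (n : ℤ) = 0 := by
    rw [← Int.add_emod]; simp
  obtain ⟨c, hc⟩ := Int.dvd_of_emod_eq_zero hsum0
  have hc0 : c = 0 ∨ c = 1 := by
    rcases lt_trichotomy c 0 with h | h | h
    · exfalso; nlinarith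
    · exact Or.inl h
    · have : c < 2 := by nlinarith
      omega
  have hsum : (k % (n : ℤ)) + ((-k) % (n : ℤ)) = 0 ∨
      (k % (n : ℤ)) + ((-k) % (n : ℤ)) = n := by
    rcases hc0 with h | h <;> rw [h] at hc <;> omega
  unfold foldN
  omega

lemma foldN_zero (n : ℕ) : foldN n 0 = 0 := by
  simp [foldN]

lemma foldN_succ (n : ℕ) (hn : 1 ≤ n) (i : Fin (n / 2)) :
    foldN n ((i : ℤ) + 1) = (i : ℕ) + 1 := by
  have hi : (i : ℕ) < n / 2 := i.isLt
  have hbound : 2 * ((i : ℕ) + 1) ≤ n := by omega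
  have hmod : ((i : ℤ) + 1) % (n : ℤ) = (i : ℤ) + 1 := by
    apply Int.emod_eq_of_lt
    · positivity
    · push_cast; omega
  unfold foldN
  rw [hmod]
  omega

lemma g_add (n : ℕ) (k : ℤ) : g n (k + n) = g n k := by
  unfold g; rw [foldN_add]

lemma g_neg (n : ℕ) (hn : 1 ≤ n) (k : ℤ) : g n (-k) = g n k := by
  unfold g; rw [foldN_neg n hn]

lemma g_zero (n : ℕ) : g n 0 = 0 := by
  unfold g
  rw [foldN_zero]
  simp [gAux]

lemma g_succ (n : ℕ) (hn : 1 ≤ n) (i : Fin (n / 2)) :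
    g n ((i : ℤ) + 1) = Finsupp.single i 1 := by
  unfold g
  rw [foldN_succ n hn i]
  have hi : (i : ℕ) < n / 2 := i.isLt
  rw [gAux, dif_pos (by omega)]
  rfl

/-- The homomorphism `ℤ[ℤ] →+ ℤ^{⌊n/2⌋}` induced by `g`. -/
def fHom (n : ℕ) : (ℤ →₀ ℤ) →+ (Fin (n / 2) →₀ ℤ) :=
  Finsupp.liftAddHom fun k => zmultiplesHom _ (g n k)

lemma fHom_single (n : ℕ) (k c : ℤ) : fHom n (Finsupp.single k c) = c • g n k := by
  unfold fHom
  rw [Finsupp.liftAddHom_apply_single]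
  rfl

lemma fHom_e (n : ℕ) (k : ℤ) : fHom n (e k) = g n k := by
  rw [e, fHom_single, one_smul]

lemma lamRel_le_ker (n : ℕ) (hn : 1 ≤ n) : lamRel n ≤ (fHom n).ker := by
  rw [lamRel, AddSubgroup.closure_le]
  rintro v hv
  simp only [Set.mem_union, Set.mem_setOf_eq, Set.mem_singleton_iff] at hv
  rw [SetLike.mem_coe, AddMonoidHom.mem_ker]
  rcases hv with (⟨k, rfl⟩ | ⟨k, rfl⟩) | rfl
  · rw [map_sub, fHom_e, fHom_e, g_add, sub_self]
  · rw [map_sub, fHom_e, fHom_e, g_neg n hn, sub_self]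
  · rw [fHom_e, g_zero]

/-- Descend `fHom` to the quotient. -/
def fBar (n : ℕ) (hn : 1 ≤ n) : LamTilde n →+ (Fin (n / 2) →₀ ℤ) :=
  QuotientAddGroup.lift (lamRel n) (fHom n) (fun x hx => lamRel_le_ker n hn hx)

lemma fBar_mk (n : ℕ) (hn : 1 ≤ n) (v : ℤ →₀ ℤ) :
    fBar n hn (QuotientAddGroup.mk v) = fHom n v := rfl

/-- The section `ℤ^{⌊n/2⌋} →+ Λ̃ₙ`. -/
def sHom (n : ℕ) : (Fin (n / 2) →₀ ℤ) →+ LamTilde n :=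
  Finsupp.liftAddHom fun i =>
    zmultiplesHom _ (QuotientAddGroup.mk (e ((i : ℤ) + 1)))

lemma sHom_single (n : ℕ) (i : Fin (n / 2)) (c : ℤ) :
    sHom n (Finsupp.single i c) = c • (QuotientAddGroup.mk (e ((i : ℤ) + 1)) : LamTilde n) := by
  unfold sHom
  rw [Finsupp.liftAddHom_apply_single]
  rfl

lemma mk_e_shift (n : ℕ) (k : ℤ) :
    (QuotientAddGroup.mk (e (k + n)) : LamTilde n) = QuotientAddGroup.mk (e k) := by
  rw [QuotientAddGroup.eq, neg_add_eq_sub]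
  exact AddSubgroup.subset_closure (Or.inl (Or.inl ⟨k, rfl⟩))

lemma mk_e_neg (n : ℕ) (k : ℤ) :
    (QuotientAddGroup.mk (e (-k)) : LamTilde n) = QuotientAddGroup.mk (e k) := by
  rw [QuotientAddGroup.eq, neg_add_eq_sub]
  exact AddSubgroup.subset_closure (Or.inl (Or.inr ⟨k, rfl⟩))

lemma mk_e_zero (n : ℕ) : (QuotientAddGroup.mk (e 0) : LamTilde n) = 0 := by
  rw [QuotientAddGroup.eq_zero_iff]
  exact AddSubgroup.subset_closure (Or.inr rfl)

lemma mk_e_shift_mul (n : ℕ) (k : ℤ) (q : ℤ) :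
    (QuotientAddGroup.mk (e (k + q * n)) : LamTilde n) = QuotientAddGroup.mk (e k) := by
  induction q using Int.induction_on with
  | zero => norm_num
  | succ q ih =>
      have h : k + ((q : ℤ) + 1) * n = (k + q * n) + n := by ring
      rw [h, mk_e_shift, ih]
  | pred q ih =>
      have h : (k + (-(q : ℤ) - 1) * n) + n = k + (-(q : ℤ)) * n := by ring
      have h2 := mk_e_shift n (k + (-(q : ℤ) - 1) * n)
      rw [h] at h2
      rw [← h2, ih]

lemma mk_e_mod (n : ℕ) (hn : 1 ≤ n) (k : ℤ) :
    (QuotientAddGroup.mk (e k) : LamTilde n)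
      = QuotientAddGroup.mk (e ((k % (n : ℤ)).toNat : ℤ)) := by
  obtain ⟨hlt, hcast⟩ := emod_facts n hn k
  have hk : k = ((k % (n : ℤ)).toNat : ℤ) + (k / n) * n := by
    rw [hcast]
    have := Int.emod_add_mul_ediv k (n : ℤ)
    linarith
  conv_lhs => rw [hk]
  exact mk_e_shift_mul n _ _

/-- Key lemma: the section composed with the reduction gives back `[k]`. -/
lemma sHom_g (n : ℕ) (hn : 1 ≤ n) (k : ℤ) :
    sHom n (g n k) = (QuotientAddGroup.mk (e k) : LamTilde n) := by
  obtain ⟨hlt, hcast⟩ := emod_facts n hn k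
  set m : ℕ := (k % (n : ℤ)).toNat with hm
  have hmk : (QuotientAddGroup.mk (e k) : LamTilde n) = QuotientAddGroup.mk (e (m : ℤ)) :=
    mk_e_mod n hn k
  have hfold : foldN n k = min m (n - m) := rfl
  by_cases h0 : m = 0
  · have hf : foldN n k = 0 := by omega
    rw [g, hf, gAux, dif_neg (by omega), map_zero, hmk, h0]
    rw [Int.natCast_zero, mk_e_zero]
  · by_cases hle : m ≤ n - m
    · have hf : foldN n k = m := by omega
      rw [g, hf, gAux, dif_pos (by omega), sHom_single, one_smul, hmk]
      congr 2
      push_cast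
      omega
    · have hf : foldN n k = n - m := by omega
      rw [g, hf, gAux, dif_pos (by omega), sHom_single, one_smul]
      have step1 : (QuotientAddGroup.mk (e (m : ℤ)) : LamTilde n)
          = QuotientAddGroup.mk (e (-(m : ℤ))) := (mk_e_neg n (m : ℤ)).symm
      have step2 : (QuotientAddGroup.mk (e (-(m : ℤ) + 1 * n)) : LamTilde n)
          = QuotientAddGroup.mk (e (-(m : ℤ))) := mk_e_shift_mul n _ 1
      rw [hmk, step1, ← step2]
      congr 2
      push_cast
      omega

lemma sHom_fHom (n : ℕ) (hn : 1 ≤ n) (v : ℤ →₀ ℤ) :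
    sHom n (fHom n v) = (QuotientAddGroup.mk v : LamTilde n) := by
  have h : (sHom n).comp (fHom n) = QuotientAddGroup.mk' (lamRel n) := by
    apply Finsupp.addHom_ext
    intro k c
    simp only [AddMonoidHom.coe_comp, Function.comp_apply, QuotientAddGroup.mk'_apply]
    rw [fHom_single, map_zsmul, sHom_g n hn]
    have hsc : Finsupp.single k c = c • e k := by
      rw [e, Finsupp.smul_single, smul_eq_mul, mul_one]
    rw [hsc]
    exact (map_zsmul (QuotientAddGroup.mk' (lamRel n)) c (e k)).symm
  exact DFunLike.congr_fun h v

lemma fBar_sHom (n : ℕ) (hn : 1 ≤ n) (w : Fin (n / 2) →₀ ℤ) :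
    fBar n hn (sHom n w) = w := by
  have h : (fBar n hn).comp (sHom n) = AddMonoidHom.id _ := by
    apply Finsupp.addHom_ext
    intro i c
    simp only [AddMonoidHom.coe_comp, Function.comp_apply, AddMonoidHom.id_apply]
    rw [sHom_single, map_zsmul, fBar_mk, fHom_e, g_succ n hn]
    rw [Finsupp.smul_single, smul_eq_mul, mul_one]
  exact DFunLike.congr_fun h w

/-- The additive equivalence `Λ̃ₙ ≃+ ℤ^{⌊n/2⌋}`. -/
def lamEquiv (n : ℕ) (hn : 1 ≤ n) : LamTilde n ≃+ (Fin (n / 2) →₀ ℤ) :=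
  { toFun := fBar n hn
    invFun := sHom n
    left_inv := by
      intro x
      induction x using QuotientAddGroup.induction_on with
      | H v => rw [fBar_mk, sHom_fHom n hn]
    right_inv := fun w => fBar_sHom n hn w
    map_add' := map_add _ }

end LamAux

theorem stmt5 (n : ℕ) (hn : 1 ≤ n) :
    ∃ b : Module.Basis (Fin (n / 2)) ℤ (LamTilde n),
      ∀ i : Fin (n / 2), b i = QuotientAddGroup.mk (e ((i : ℕ) + 1 : ℤ)) := by
  refine ⟨Finsupp.basisSingleOne.map (LamAux.lamEquiv n hn).toIntLinearEquiv.symm, ?_⟩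
  intro i
  rw [Module.Basis.map_apply, Finsupp.coe_basisSingleOne]
  have h1 : (((LamAux.lamEquiv n hn).toIntLinearEquiv (modM := inferInstance) (modM₂ := inferInstance)).symm (Finsupp.single i 1) : LamTilde n)
      = LamAux.sHom n (Finsupp.single i 1) := rfl
  rw [h1, LamAux.sHom_single, one_smul]
end
end

section
/- The group T₃ is isomorphic to ℤ/2ℤ. -/
noncomputable section

/-- The additive subgroup of `ℤ[ℤ]` generated by all `[k] − [k+n]`,
all `[k] − [−k]`, the element `[0]`, and all sums `[m] + [m+1] + ⋯ + [m+n−1]`. -/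
def tRel (n : ℕ) : AddSubgroup (ℤ →₀ ℤ) :=
  AddSubgroup.closure
    ({v | ∃ k : ℤ, v = e k - e (k + n)} ∪ {v | ∃ k : ℤ, v = e k - e (-k)} ∪ {e 0}
      ∪ {v | ∃ m : ℤ, v = ∑ i ∈ Finset.range n, e (m + i)})

/-- The group `Tₙ`. -/
abbrev T (n : ℕ) := (ℤ →₀ ℤ) ⧸ tRel n

namespace Stmt7Aux

lemma mem1 (k : ℤ) : e k - e (k + 3) ∈ tRel 3 := by
  apply AddSubgroup.subset_closure
  left; left; left
  exact ⟨k, by norm_num⟩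

lemma mem2 (k : ℤ) : e k - e (-k) ∈ tRel 3 := by
  apply AddSubgroup.subset_closure
  left; left; right
  exact ⟨k, rfl⟩

lemma mem3 : e 0 ∈ tRel 3 := by
  apply AddSubgroup.subset_closure
  left; right; rfl

lemma sum_eq (m : ℤ) : ∑ i ∈ Finset.range 3, e (m + i) = e m + e (m + 1) + e (m + 2) := by
  rw [Finset.sum_range_succ, Finset.sum_range_succ, Finset.sum_range_succ,
    Finset.sum_range_zero]
  norm_num

lemma mem4 (m : ℤ) : e m + e (m + 1) + e (m + 2) ∈ tRel 3 := by
  rw [← sum_eq]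
  apply AddSubgroup.subset_closure
  right
  exact ⟨m, rfl⟩

/-- basic quotient elements -/
def g (k : ℤ) : T 3 := QuotientAddGroup.mk (e k)

lemma g_add3 (k : ℤ) : g (k + 3) = g k := by
  rw [g, g, QuotientAddGroup.eq_iff_sub_mem]
  rw [← neg_sub (e k) (e (k + 3))]
  exact neg_mem (mem1 k)

lemma g_neg (k : ℤ) : g (-k) = g k := by
  rw [g, g, QuotientAddGroup.eq_iff_sub_mem]
  rw [← neg_sub (e k) (e (-k))]
  exact neg_mem (mem2 k)

lemma g_zero : g 0 = 0 := by
  rw [g, QuotientAddGroup.eq_zero_iff]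
  exact mem3

lemma g_sub3 (k : ℤ) : g (k - 3) = g k := by
  have := g_add3 (k - 3)
  simp only [sub_add_cancel] at this
  exact this.symm

lemma g_period (q r : ℤ) : g (3 * q + r) = g r := by
  induction q using Int.induction_on with
  | zero => simp
  | succ q ih => have := g_add3 (3 * q + r); rw [← ih, ← this]; ring_nf
  | pred q ih => have := g_sub3 (3 * (-q) + r); rw [← ih, ← this]; ring_nf

lemma g_two : g 2 = g 1 := by
  have h1 : g (-1) = g 1 := g_neg 1
  have h2 : g (-1 + 3) = g (-1) := g_add3 (-1)
  norm_num at h2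
  rw [h2]; exact h1

lemma g_three : g 3 = 0 := by
  have := g_add3 0
  norm_num at this
  rw [this, g_zero]

lemma g_mod (k : ℤ) : g k = g (k % 3) := by
  have h := Int.mul_ediv_add_emod k 3
  have : g k = g (3 * (k / 3) + k % 3) := by rw [h]
  rw [this, g_period]

lemma g_eq (k : ℤ) : g k = if (3:ℤ) ∣ k then 0 else g 1 := by
  rw [g_mod]
  have h0 : 0 ≤ k % 3 := Int.emod_nonneg k (by norm_num)
  have h3 : k % 3 < 3 := Int.emod_lt_of_pos k (by norm_num)
  have hd : (3:ℤ) ∣ k ↔ k % 3 = 0 := Int.dvd_iff_emod_eq_zero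
  interval_cases h : k % 3
  · simp [hd, h, g_zero]
  · rw [if_neg (by omega)]
  · rw [if_neg (by omega)]; exact g_two

lemma two_g_one : (2 : ℤ) • g 1 = 0 := by
  have hsum : g 1 + g 2 + g 3 = 0 := by
    have : (QuotientAddGroup.mk (e 1 + e (1+1) + e (1+2)) : T 3) = 0 := by
      rw [QuotientAddGroup.eq_zero_iff]; exact mem4 1
    have h2 : ((1:ℤ)+1) = 2 := by norm_num
    have h3 : ((1:ℤ)+2) = 3 := by norm_num
    rw [h2, h3] at this
    simpa [g] using this
  rw [g_two, g_three, add_zero] at hsum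
  rw [two_zsmul]
  exact hsum

/-- the character -/
def c (k : ℤ) : ZMod 2 := if (k : ZMod 3) = 0 then 0 else 1

def φ : (ℤ →₀ ℤ) →+ ZMod 2 :=
  Finsupp.liftAddHom (fun k => zmultiplesHom (ZMod 2) (c k))

lemma φ_e (k : ℤ) : φ (e k) = c k := by
  rw [φ, e, Finsupp.liftAddHom_apply_single, zmultiplesHom_apply, one_zsmul]

lemma cast_add3 (k : ℤ) : ((k + 3 : ℤ) : ZMod 3) = (k : ZMod 3) := by
  have h3 : ((3:ℤ) : ZMod 3) = 0 := by decide
  push_cast at h3 ⊢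
  rw [h3, add_zero]

lemma c_add3 (k : ℤ) : c (k + 3) = c k := by
  unfold c
  simp only [cast_add3]

lemma c_neg (k : ℤ) : c (-k) = c k := by
  unfold c
  simp only [Int.cast_neg, neg_eq_zero]

lemma c_zero : c 0 = 0 := by simp [c]

lemma c_sum_aux : ∀ r : ZMod 3,
    (if r = 0 then (0:ZMod 2) else 1) + (if r + 1 = 0 then 0 else 1)
      + (if r + 2 = 0 then 0 else 1) = 0 := by decide

lemma c_sum (m : ℤ) : c m + c (m + 1) + c (m + 2) = 0 := by
  unfold c
  have h1 : ((m + 1 : ℤ) : ZMod 3) = (m : ZMod 3) + 1 := by push_cast; ring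
  have h2 : ((m + 2 : ℤ) : ZMod 3) = (m : ZMod 3) + 2 := by push_cast; ring
  rw [h1, h2]
  exact c_sum_aux (m : ZMod 3)

lemma φ_vanish : tRel 3 ≤ φ.ker := by
  rw [tRel, AddSubgroup.closure_le]
  rintro v hv
  obtain (((⟨k, rfl⟩ | ⟨k, rfl⟩) | rfl) | ⟨m, rfl⟩) := hv <;>
    rw [SetLike.mem_coe, AddMonoidHom.mem_ker]
  · have h : ((3:ℕ):ℤ) = 3 := by norm_num
    rw [h, map_sub, φ_e, φ_e, c_add3, sub_self]
  · rw [map_sub, φ_e, φ_e, c_neg, sub_self]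
  · rw [φ_e, c_zero]
  · rw [sum_eq, map_add, map_add, φ_e, φ_e, φ_e]
    exact c_sum m

def α : T 3 →+ ZMod 2 :=
  QuotientAddGroup.lift (tRel 3) φ (fun x hx => φ_vanish hx)

lemma α_g (k : ℤ) : α (g k) = c k := by
  simp [α, g, φ_e]

def β : ZMod 2 →+ T 3 :=
  ZMod.lift 2 ⟨zmultiplesHom (T 3) (g 1), by simpa using two_g_one⟩

lemma β_int (k : ℤ) : β ((k : ZMod 2)) = k • g 1 := by
  rw [β, ZMod.lift_coe]; rfl

lemma βα_g (k : ℤ) : β (α (g k)) = g k := by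
  rw [α_g, g_eq, c]
  have hdvd : (k : ZMod 3) = 0 ↔ (3:ℤ) ∣ k := by
    rw [ZMod.intCast_zmod_eq_zero_iff_dvd]; norm_num
  by_cases h : (3:ℤ) ∣ k
  · rw [if_pos (hdvd.mpr h), if_pos h, map_zero]
  · rw [if_neg (fun hc => h (hdvd.mp hc)), if_neg h]
    have : (1 : ZMod 2) = ((1:ℤ) : ZMod 2) := by norm_num
    rw [this, β_int, one_smul]

lemma left_inv : ∀ x : T 3, β (α x) = x := by
  intro x
  induction x using QuotientAddGroup.induction_on with
  | H f =>
    induction f using Finsupp.induction_linear with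
    | zero => simp
    | add f h ihf ihh =>
        have : (QuotientAddGroup.mk (f + h) : T 3)
            = QuotientAddGroup.mk f + QuotientAddGroup.mk h := rfl
        rw [this, map_add, map_add, ihf, ihh]
    | single a b =>
        have hsm : Finsupp.single a b = b • e a := by
          rw [e, Finsupp.smul_single, smul_eq_mul, mul_one]
        have : (QuotientAddGroup.mk (Finsupp.single a b) : T 3) = b • g a := by
          rw [hsm]; rfl
        rw [this, map_zsmul, map_zsmul, βα_g]

lemma right_inv : ∀ x : ZMod 2, α (β x) = x := by
  intro x
  obtain ⟨k, rfl⟩ := ZMod.intCast_surjective x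
  rw [β_int, map_zsmul, α_g]
  have : c 1 = 1 := by simp [c]
  rw [this]
  exact zsmul_one k

end Stmt7Aux

theorem stmt7 : Nonempty (T 3 ≃+ ZMod 2) := by
  exact ⟨AddEquiv.mk' ⟨Stmt7Aux.α, Stmt7Aux.β, Stmt7Aux.left_inv, Stmt7Aux.right_inv⟩
    Stmt7Aux.α.map_add⟩
end
end

section
/- The group T₄ is isomorphic to ℤ. -/
noncomputable section

/-- Weight function. -/
def f (k : ℤ) : ℤ := if k % 4 = 0 then 0 else if k % 4 = 2 then -2 else 1

def φ : (ℤ →₀ ℤ) →+ ℤ := (Finsupp.linearCombination ℤ f).toAddMonoidHom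

@[simp] lemma φ_e (k : ℤ) : φ (e k) = f k := by
  show Finsupp.linearCombination ℤ f (Finsupp.single k 1) = f k
  rw [Finsupp.linearCombination_single, one_smul]

lemma f_emod (k : ℤ) : f (k % 4) = f k := by
  have h : k % 4 % 4 = k % 4 := by omega
  simp only [f, h]

lemma hker : ∀ v ∈ tRel 4, φ v = 0 := by
  intro v hv
  refine AddSubgroup.closure_induction ?_ (map_zero φ) ?_ ?_ hv
  · rintro x hx
    rcases hx with ((⟨k, rfl⟩ | ⟨k, rfl⟩) | rfl) | ⟨m, rfl⟩
    · push_cast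
      simp only [map_sub, φ_e, f]
      split_ifs <;> omega
    · simp only [map_sub, φ_e, f]
      split_ifs <;> omega
    · simp [f]
    · simp only [Finset.sum_range_succ, Finset.sum_range_zero, zero_add, map_add, φ_e]
      push_cast
      simp only [f, add_zero]
      split_ifs <;> omega
  · intro x y _ _ hx hy; simp [map_add, hx, hy]
  · intro x _ hx; simp [hx]

def mk4 : (ℤ →₀ ℤ) →+ T 4 := QuotientAddGroup.mk' (tRel 4)

lemma mk4_rel {v : ℤ →₀ ℤ}
    (h : v ∈ ({v | ∃ k : ℤ, v = e k - e (k + (4:ℕ))} ∪ {v | ∃ k : ℤ, v = e k - e (-k)}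
      ∪ {e 0} ∪ {v | ∃ m : ℤ, v = ∑ i ∈ Finset.range 4, e (m + i)} : Set (ℤ →₀ ℤ))) :
    mk4 v = 0 := by
  rw [mk4, QuotientAddGroup.mk'_apply, QuotientAddGroup.eq_zero_iff]
  exact AddSubgroup.subset_closure h

lemma mk4_period (k : ℤ) : mk4 (e k) = mk4 (e (k + 4)) := by
  have h : mk4 (e k - e (k + 4)) = 0 := by
    apply mk4_rel
    left; left; left
    exact ⟨k, by norm_num⟩
  rw [map_sub, sub_eq_zero] at h
  exact h

lemma mk4_neg (k : ℤ) : mk4 (e k) = mk4 (e (-k)) := by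
  have h : mk4 (e k - e (-k)) = 0 := by
    apply mk4_rel
    left; left; right
    exact ⟨k, rfl⟩
  rw [map_sub, sub_eq_zero] at h
  exact h

lemma mk4_zero : mk4 (e 0) = 0 := by
  apply mk4_rel
  left; right; rfl

lemma mk4_sum (m : ℤ) :
    mk4 (e m) + mk4 (e (m+1)) + mk4 (e (m+2)) + mk4 (e (m+3)) = 0 := by
  have h : mk4 (∑ i ∈ Finset.range 4, e (m + i)) = 0 := by
    apply mk4_rel
    right
    exact ⟨m, rfl⟩
  simpa [Finset.sum_range_succ, map_add] using h

lemma mk4_three : mk4 (e 3) = mk4 (e 1) := by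
  have h1 : mk4 (e (-1)) = mk4 (e 3) := by
    have := mk4_period (-1); norm_num at this; exact this
  have h2 := mk4_neg 1
  rw [h2, h1]

lemma mk4_two : mk4 (e 2) = (-2 : ℤ) • mk4 (e 1) := by
  have h := mk4_sum 0
  norm_num [mk4_zero, mk4_three] at h
  have h' : mk4 (e 2) + (mk4 (e 1) + mk4 (e 1)) = 0 := by rw [← h]; abel
  have h2 : mk4 (e 2) = -(mk4 (e 1) + mk4 (e 1)) := by
    have := neg_eq_of_add_eq_zero_right h'
    rw [← this, neg_neg]
  rw [h2]; abel

lemma mk4_per (q : ℤ) (k : ℤ) : mk4 (e k) = mk4 (e (k + 4 * q)) := by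
  induction q using Int.induction_on with
  | zero => norm_num
  | succ n ih =>
      have := mk4_period (k + 4 * n)
      rw [ih, this]
      ring_nf
  | pred n ih =>
      have hstep := mk4_period (k + 4 * (-(n:ℤ) - 1))
      have harg : k + 4 * (-(n:ℤ) - 1) + 4 = k + 4 * (-(n:ℤ)) := by ring
      rw [harg] at hstep
      rw [ih, ← hstep]

lemma f_one : f 1 = 1 := by norm_num [f]
lemma f_two : f 2 = -2 := by norm_num [f]
lemma f_three : f 3 = 1 := by norm_num [f]
lemma f_zero : f 0 = 0 := by norm_num [f]

lemma key (k : ℤ) : mk4 (e k) = f k • mk4 (e 1) := by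
  have hper := mk4_per (k / 4) (k % 4)
  have hk : k % 4 + 4 * (k / 4) = k := by omega
  rw [hk] at hper
  rw [← f_emod k, ← hper]
  have : k % 4 = 0 ∨ k % 4 = 1 ∨ k % 4 = 2 ∨ k % 4 = 3 := by omega
  rcases this with h | h | h | h <;> rw [h]
  · rw [mk4_zero, f_zero]; simp
  · rw [f_one]; simp
  · rw [mk4_two, f_two]
  · rw [mk4_three, f_three]; simp

def φbar : T 4 →+ ℤ := QuotientAddGroup.lift (tRel 4) φ hker

def ψ : ℤ →+ T 4 := zmultiplesHom (T 4) (mk4 (e 1))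

lemma φbar_mk (v : ℤ →₀ ℤ) : φbar (mk4 v) = φ v := rfl

theorem stmt8 : Nonempty (T 4 ≃+ ℤ) := by
  refine ⟨{ toFun := φbar, invFun := ψ, left_inv := ?_, right_inv := ?_,
            map_add' := map_add φbar }⟩
  · intro x
    induction x using QuotientAddGroup.induction_on with
    | H l =>
      show ψ (φbar (mk4 l)) = mk4 l
      induction l using Finsupp.induction_linear with
      | zero => simp
      | add g h hg hh => rw [map_add, map_add, map_add, hg, hh]
      | single a b =>
        have hs : (Finsupp.single a b : ℤ →₀ ℤ) = b • e a := by
          rw [e, Finsupp.smul_single, smul_eq_mul, mul_one]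
        rw [φbar_mk, hs, map_zsmul, map_zsmul, φ_e, map_zsmul]
        congr 1
        rw [key a, ψ, zmultiplesHom_apply]
  · intro n
    show φbar (n • mk4 (e 1)) = n
    rw [map_zsmul, φbar_mk, φ_e, f_one, smul_eq_mul, mul_one]
end
end

section
/- For every odd integer n ≥ 3, the image in Tₙ of the element [1] + [2] + ⋯ + [(n−1)/2] of ℤ[ℤ] is a nonzero element of order 2 (it is nonzero, and twice it equals zero). -/
noncomputable section

/-
The homomorphism `Tₙ → ℤ/2` sending `[k]` to `1` exactly when `k ≡ ±1 (mod n)` is well defined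
for `n ≥ 3`, because every window of `n` consecutive integers contains exactly two such `k`; it
sends `[1] + ⋯ + [m]` to `1` as long as `m + 1 < n`, so this element is nonzero. For `n = 2m + 1`,
the relations give `[k] = [n - k]`, so `[1] + ⋯ + [m] = [m + 1] + ⋯ + [2m]`, and the sum of the
two is `[0] + ⋯ + [n - 1] - [0] = 0`.
-/

open Finset

theorem ZMod.sum_range_natCast {M : Type*} [AddCommMonoid M] (n : ℕ) [NeZero n]
    (f : ZMod n → M) : ∑ i ∈ range n, f i = ∑ x, f x := by
  obtain ⟨k, rfl⟩ : ∃ k, n = k + 1 := Nat.exists_eq_succ_of_ne_zero (NeZero.ne n)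
  rw [← Fin.sum_univ_eq_sum_range]
  exact Fintype.sum_congr _ _ fun i => congrArg f (ZMod.natCast_zmod_val (n := k + 1) i)

theorem ZMod.sum_range_intCast_add {M : Type*} [AddCommMonoid M] (n : ℕ) [NeZero n]
    (f : ZMod n → M) (m : ℤ) : ∑ i ∈ range n, f ((m + i : ℤ) : ZMod n) = ∑ x, f x := by
  push_cast
  rw [ZMod.sum_range_natCast n (fun x => f (m + x))]
  exact Equiv.sum_comp (Equiv.addLeft (m : ZMod n)) f

theorem Finset.sum_range_two_mul_add_one_of_symm {M : Type*} [AddCommMonoid M] (f : ℤ → M)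
    (m : ℕ) (hf : ∀ k, f (2 * m + 1 - k) = f k) :
    ∑ i ∈ range (2 * m + 1), f i = f 0 + 2 • ∑ i ∈ range m, f (i + 1) := by
  have hreflect : ∑ i ∈ range m, f (m + i + 1) = ∑ i ∈ range m, f (i + 1) := by
    rw [← sum_range_reflect]
    refine sum_congr rfl fun i hi => ?_
    rw [← hf]
    congr 1
    have := mem_range.mp hi
    push_cast [Nat.cast_sub (by omega : i ≤ m - 1), Nat.cast_sub (by omega : 1 ≤ m)]
    ring
  rw [sum_range_succ', two_mul, sum_range_add]
  push_cast
  rw [two_nsmul, hreflect, add_comm]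

def pmOneIndicator (n : ℕ) (x : ZMod n) : ZMod 2 := if x = 1 ∨ x = -1 then 1 else 0

theorem pmOneIndicator_neg (n : ℕ) (x : ZMod n) : pmOneIndicator n (-x) = pmOneIndicator n x := by
  simp only [pmOneIndicator, neg_eq_iff_eq_neg, neg_neg, or_comm]

theorem pmOneIndicator_zero {n : ℕ} (hn : 1 < n) : pmOneIndicator n 0 = 0 := by
  have : Fact (1 < n) := ⟨hn⟩
  simp [pmOneIndicator]

theorem sum_pmOneIndicator {n : ℕ} [NeZero n] (hn : 2 < n) : ∑ x, pmOneIndicator n x = 0 := by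
  have : Fact (2 < n) := ⟨hn⟩
  have hsupp : ({x | x = 1 ∨ x = -1} : Finset (ZMod n)) = {1, -1} := by
    ext x
    simp
  simp only [pmOneIndicator, sum_boole, hsupp, card_pair ZMod.neg_one_ne_one.symm]
  rfl

theorem pmOneIndicator_natCast_add_one {n i : ℕ} (hi : i + 2 < n) :
    pmOneIndicator n (i + 1) = if i = 0 then 1 else 0 := by
  have hone : (i + 1 : ZMod n) = 1 ↔ i = 0 := by
    rw [add_eq_right, ZMod.natCast_eq_zero_iff]
    exact ⟨fun h => Nat.eq_zero_of_dvd_of_lt h (by omega), fun h => h ▸ dvd_zero n⟩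
  have hneg : (i + 1 : ZMod n) ≠ -1 := by
    rw [Ne, eq_neg_iff_add_eq_zero, add_assoc, one_add_one_eq_two, ← Nat.cast_ofNat,
      ← Nat.cast_add, ZMod.natCast_eq_zero_iff]
    exact Nat.not_dvd_of_pos_of_lt (by omega) hi
  simp only [pmOneIndicator, hone, hneg, or_false]

namespace T

variable {n : ℕ}

theorem mk_e_add_natCast (k : ℤ) :
    (QuotientAddGroup.mk (e (k + n)) : T n) = QuotientAddGroup.mk (e k) := by
  rw [eq_comm, QuotientAddGroup.eq_iff_sub_mem]
  exact AddSubgroup.subset_closure (Or.inl (Or.inl (Or.inl ⟨k, rfl⟩)))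

theorem mk_e_neg (k : ℤ) : (QuotientAddGroup.mk (e (-k)) : T n) = QuotientAddGroup.mk (e k) := by
  rw [eq_comm, QuotientAddGroup.eq_iff_sub_mem]
  exact AddSubgroup.subset_closure (Or.inl (Or.inl (Or.inr ⟨k, rfl⟩)))

theorem mk_e_zero : (QuotientAddGroup.mk (e 0) : T n) = 0 :=
  (QuotientAddGroup.eq_zero_iff _).mpr (AddSubgroup.subset_closure (Or.inl (Or.inr rfl)))

theorem sum_range_mk_e_add (m : ℤ) :
    ∑ i ∈ range n, (QuotientAddGroup.mk (e (m + i)) : T n) = 0 := by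
  rw [← QuotientAddGroup.mk_sum, QuotientAddGroup.eq_zero_iff]
  exact AddSubgroup.subset_closure (Or.inr ⟨m, rfl⟩)

theorem mk_e_natCast_sub (k : ℤ) :
    (QuotientAddGroup.mk (e (n - k)) : T n) = QuotientAddGroup.mk (e k) := by
  rw [sub_eq_neg_add, mk_e_add_natCast, mk_e_neg]

section lift

variable [NeZero n] {A : Type*} [AddCommGroup A] (w : ZMod n → A)

def lift (hneg : ∀ x, w (-x) = w x) (hzero : w 0 = 0) (hsum : ∑ x, w x = 0) : T n →+ A :=
  QuotientAddGroup.lift (tRel n) (Finsupp.liftAddHom fun k => zmultiplesHom A (w k)) <| by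
    have he : ∀ k, Finsupp.liftAddHom (fun k : ℤ => zmultiplesHom A (w k)) (e k) = w k := by
      intro k
      simp [e]
    rw [tRel, AddSubgroup.closure_le]
    rintro v (((⟨k, rfl⟩ | ⟨k, rfl⟩) | rfl) | ⟨m, rfl⟩) <;>
      simp only [SetLike.mem_coe, AddMonoidHom.mem_ker, map_sub, map_sum, he]
    · simp
    · simp [hneg]
    · simpa using hzero
    · rw [ZMod.sum_range_intCast_add n w m, hsum]

theorem lift_mk_e (hneg : ∀ x, w (-x) = w x) (hzero : w 0 = 0) (hsum : ∑ x, w x = 0) (k : ℤ) :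
    lift w hneg hzero hsum (e k) = w k := by
  simp [lift, e]

end lift

theorem mk_sum_range_e_add_one_ne_zero {m : ℕ} (hm0 : 0 < m) (hmn : m + 1 < n) :
    (QuotientAddGroup.mk (∑ i ∈ range m, e ((i : ℤ) + 1)) : T n) ≠ 0 := by
  have : NeZero n := ⟨by omega⟩
  let φ := lift (pmOneIndicator n) (pmOneIndicator_neg n) (pmOneIndicator_zero (by omega))
    (sum_pmOneIndicator (by omega))
  have hterm : ∀ i ∈ range m, φ (e ((i : ℤ) + 1)) = if i = 0 then 1 else 0 := by
    intro i hi
    have hin : i < m := mem_range.mp hi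
    simpa [φ, lift_mk_e] using pmOneIndicator_natCast_add_one (n := n) (i := i) (by omega)
  have hφ : φ (QuotientAddGroup.mk (∑ i ∈ range m, e ((i : ℤ) + 1))) = 1 := by
    rw [QuotientAddGroup.mk_sum, map_sum, sum_congr rfl hterm, sum_ite_eq',
      if_pos (mem_range.mpr hm0)]
  intro h
  rw [h, map_zero] at hφ
  exact zero_ne_one hφ

theorem mk_sum_range_e_add_one_add_self (m : ℕ) :
    (QuotientAddGroup.mk (∑ i ∈ range m, e ((i : ℤ) + 1)) : T (2 * m + 1)) +
      QuotientAddGroup.mk (∑ i ∈ range m, e ((i : ℤ) + 1)) = 0 := by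
  set t : ℤ → T (2 * m + 1) := fun k => QuotientAddGroup.mk (e k)
  have hsymm : ∀ k, t (2 * m + 1 - k) = t k := by
    simpa using mk_e_natCast_sub (n := 2 * m + 1)
  have hwindow : ∑ i ∈ range (2 * m + 1), t i = 0 := by
    simpa using sum_range_mk_e_add (n := 2 * m + 1) 0
  have hzero : t 0 = 0 := mk_e_zero
  rw [Finset.sum_range_two_mul_add_one_of_symm t m hsymm, hzero, zero_add] at hwindow
  simpa only [QuotientAddGroup.mk_sum, two_nsmul] using hwindow

end T

theorem stmt9 (n : ℕ) (hodd : Odd n) (hn : 3 ≤ n) :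
    (QuotientAddGroup.mk (∑ i ∈ Finset.range ((n - 1) / 2), e ((i : ℤ) + 1)) : T n) ≠ 0 ∧
      (QuotientAddGroup.mk (∑ i ∈ Finset.range ((n - 1) / 2), e ((i : ℤ) + 1)) : T n) +
        (QuotientAddGroup.mk (∑ i ∈ Finset.range ((n - 1) / 2), e ((i : ℤ) + 1)) : T n) = 0 := by
  obtain ⟨m, rfl⟩ := hodd
  rw [show (2 * m + 1 - 1) / 2 = m by omega]
  exact ⟨T.mk_sum_range_e_add_one_ne_zero (by omega) (by omega),
    T.mk_sum_range_e_add_one_add_self m⟩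
end
end

section
/- For every even integer n ≥ 2, the group Tₙ is a free abelian group of rank n/2 − 1; more precisely, the images of the basis elements [1], [2], …, [n/2 − 1] form a ℤ-basis of Tₙ. -/
noncomputable section

namespace StmtAux

/-- Value on residue `r`. -/
def frN (n r : ℕ) : Fin (n / 2 - 1) →₀ ℤ :=
  if h : 1 ≤ r ∧ r ≤ n / 2 - 1 then
    Finsupp.single ⟨r - 1, by omega⟩ 1
  else if h2 : n / 2 + 1 ≤ r ∧ r ≤ n - 1 ∧ n - r - 1 < n / 2 - 1 then
    Finsupp.single ⟨n - r - 1, h2.2.2⟩ 1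
  else if r = n / 2 then (-2 : ℤ) • ∑ j : Fin (n / 2 - 1), Finsupp.single j 1
  else 0

/-- The reduction of a basis element `[k]` in terms of the residue of `k` mod `n`. -/
def fr (n : ℕ) (k : ℤ) : Fin (n / 2 - 1) →₀ ℤ := frN n (k % n).toNat

lemma fr_congr (n : ℕ) {k j : ℤ} (h : k % n = j % n) : fr n k = fr n j := by
  simp only [fr, h]

lemma fr_add_n (n : ℕ) (k : ℤ) : fr n (k + n) = fr n k := by
  refine fr_congr n ?_
  have : (k + (n : ℤ)) = k + n * 1 := by ring
  rw [this, Int.add_mul_emod_self_left]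

lemma emod_toNat_lt (n : ℕ) (hn : 2 ≤ n) (k : ℤ) : (k % n).toNat < n := by
  have h1 : 0 ≤ k % n := Int.emod_nonneg k (by positivity)
  have h2 : k % n < n := Int.emod_lt_of_pos k (by positivity)
  omega

lemma emod_self_toNat (n : ℕ) (hn : 2 ≤ n) (r : ℕ) (hr : r < n) :
    (((r : ℤ)) % n).toNat = r := by
  rw [Int.emod_eq_of_lt (by positivity) (by exact_mod_cast hr)]
  simp

lemma fr_neg (n : ℕ) (hn : 2 ≤ n) (he : n % 2 = 0) (k : ℤ) : fr n (-k) = fr n k := by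
  have h1 : 0 ≤ k % n := Int.emod_nonneg k (by positivity)
  have h2 : k % n < n := Int.emod_lt_of_pos k (by positivity)
  by_cases h0 : k % n = 0
  · have hdvd : (n : ℤ) ∣ k := Int.dvd_of_emod_eq_zero h0
    have : (-k) % n = 0 := Int.emod_eq_zero_of_dvd (by exact hdvd.neg_right)
    refine fr_congr n (by rw [this, h0])
  · have hneg : (-k) % n = n - k % n := by
      have : (-k) % n = (-(k % n)) % n := by
        conv_lhs => rw [show -k = -(k % n) + n * (-(k / n)) by rw [Int.emod_def]; ring]
        rw [Int.add_mul_emod_self_left]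
      rw [this, show -(k % n) = (n - k % n) + n * (-1) by ring, Int.add_mul_emod_self_left,
        Int.emod_eq_of_lt (by omega) (by omega)]
    have hk : (k % n).toNat < n := by omega
    have hnk : ((-k) % n).toNat = n - (k % n).toNat := by omega
    unfold fr
    rw [hnk]
    set r := (k % n).toNat with hrdef
    have hr1 : 1 ≤ r := by omega
    unfold frN
    split_ifs with a1 a2 a3 b1 b2 b3 <;>
      first
      | rfl
      | omega
      | (congr 1; simp only [Fin.mk.injEq]; omega)

lemma frN_apply (n : ℕ) (hn : 2 ≤ n) (he : n % 2 = 0) (r : ℕ) (j : Fin (n / 2 - 1)) :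
    frN n r j = (if r = (j : ℕ) + 1 then (1 : ℤ) else 0)
      + (if r = n - 1 - (j : ℕ) then 1 else 0) + (if r = n / 2 then -2 else 0) := by
  have hj := j.isLt
  have hs : ((-2 : ℤ) • ∑ j' : Fin (n / 2 - 1), Finsupp.single j' (1 : ℤ)) j = -2 := by
    rw [Finsupp.smul_apply, Finsupp.finset_sum_apply]
    simp [Finsupp.single_apply]
  unfold frN
  split_ifs with h1 h2 h3 <;>
    simp only [hs, Finsupp.single_apply, Finsupp.coe_zero, Pi.zero_apply, Fin.ext_iff,
      Fin.val_mk] <;>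
    (try split_ifs) <;> omega

lemma sum_frN (n : ℕ) (hn : 2 ≤ n) (he : n % 2 = 0) :
    ∑ r ∈ Finset.range n, frN n r = 0 := by
  ext j
  have hj := j.isLt
  rw [Finsupp.finset_sum_apply,
    Finset.sum_congr rfl (fun r _ => frN_apply n hn he r j),
    Finset.sum_add_distrib, Finset.sum_add_distrib, Finset.sum_ite_eq',
    Finset.sum_ite_eq', Finset.sum_ite_eq']
  simp only [Finset.mem_range]
  rw [if_pos (by omega), if_pos (by omega), if_pos (by omega)]
  simp

lemma sum_fr_shift (n : ℕ) (hn : 2 ≤ n) (m : ℤ) :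
    ∑ i ∈ Finset.range n, fr n (m + 1 + i) = ∑ i ∈ Finset.range n, fr n (m + i) := by
  obtain ⟨n', rfl⟩ : ∃ n', n = n' + 1 := ⟨n - 1, by omega⟩
  rw [Finset.sum_range_succ, Finset.sum_range_succ']
  have h1 : fr (n' + 1) (m + 1 + n') = fr (n' + 1) (m + ((0 : ℕ) : ℤ)) := by
    rw [show (m + 1 + (n' : ℤ)) = (m + ((0 : ℕ) : ℤ)) + (((n' + 1 : ℕ) : ℤ)) by push_cast; ring]
    exact fr_add_n _ _
  rw [h1, add_comm]
  congr 1
  refine Finset.sum_congr rfl fun i hi => ?_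
  congr 1
  push_cast
  ring

lemma sum_fr (n : ℕ) (hn : 2 ≤ n) (he : n % 2 = 0) (m : ℤ) :
    ∑ i ∈ Finset.range n, fr n (m + i) = 0 := by
  induction m using Int.induction_on with
  | zero =>
    rw [← sum_frN n hn he]
    refine Finset.sum_congr rfl fun i hi => ?_
    simp only [zero_add]
    unfold fr
    rw [emod_self_toNat n hn i (Finset.mem_range.mp hi)]
  | succ k ih =>
    calc ∑ i ∈ Finset.range n, fr n ((k : ℤ) + 1 + i)
        = ∑ i ∈ Finset.range n, fr n ((k : ℤ) + i) := sum_fr_shift n hn k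
      _ = 0 := ih
  | pred k ih =>
    calc ∑ i ∈ Finset.range n, fr n (-(k : ℤ) - 1 + i)
        = ∑ i ∈ Finset.range n, fr n (-(k : ℤ) - 1 + 1 + i) := (sum_fr_shift n hn _).symm
      _ = ∑ i ∈ Finset.range n, fr n (-(k : ℤ) + i) := by
          refine Finset.sum_congr rfl fun i _ => ?_; congr 1; ring
      _ = 0 := ih

/-- The induced map on the quotient. -/
def phi (n : ℕ) : (ℤ →₀ ℤ) →ₗ[ℤ] (Fin (n / 2 - 1) →₀ ℤ) :=
  Finsupp.lift _ ℤ ℤ (fr n)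

lemma phi_e (n : ℕ) (k : ℤ) : phi n (e k) = fr n k := by
  rw [phi, e, Finsupp.lift_apply, Finsupp.sum_single_index (zero_smul ℤ (fr n k))]
  exact one_smul ℤ _

lemma gen1 (n : ℕ) (k : ℤ) : e k - e (k + n) ∈ tRel n :=
  AddSubgroup.subset_closure (Or.inl (Or.inl (Or.inl ⟨k, rfl⟩)))

lemma gen2 (n : ℕ) (k : ℤ) : e k - e (-k) ∈ tRel n :=
  AddSubgroup.subset_closure (Or.inl (Or.inl (Or.inr ⟨k, rfl⟩)))

lemma gen3 (n : ℕ) : e 0 ∈ tRel n :=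
  AddSubgroup.subset_closure (Or.inl (Or.inr rfl))

lemma gen4 (n : ℕ) (m : ℤ) : (∑ i ∈ Finset.range n, e (m + i)) ∈ tRel n :=
  AddSubgroup.subset_closure (Or.inr ⟨m, rfl⟩)

lemma tRel_le_ker (n : ℕ) (hn : 2 ≤ n) (he : n % 2 = 0) :
    tRel n ≤ ((phi n).toAddMonoidHom).ker := by
  rw [tRel, AddSubgroup.closure_le]
  rintro v (((⟨k, rfl⟩ | ⟨k, rfl⟩) | rfl) | ⟨m, rfl⟩) <;>
      simp only [SetLike.mem_coe, AddMonoidHom.mem_ker, LinearMap.toAddMonoidHom_coe]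
  · rw [map_sub, phi_e, phi_e, fr_add_n, sub_self]
  · rw [map_sub, phi_e, phi_e, fr_neg n hn he, sub_self]
  · rw [phi_e]
    unfold fr
    rw [show ((0 : ℤ) % n).toNat = 0 by simp]
    unfold frN
    split_ifs <;> first | rfl | omega
  · rw [map_sum]
    simp only [phi_e]
    exact sum_fr n hn he m

lemma mk_sub_mem {n : ℕ} {v w : ℤ →₀ ℤ} (h : v - w ∈ tRel n) :
    (QuotientAddGroup.mk v : T n) = QuotientAddGroup.mk w := by
  rw [QuotientAddGroup.eq]
  have := neg_mem h
  rwa [neg_sub, sub_eq_neg_add] at this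

lemma rel_shift (n : ℕ) (k : ℤ) : ∀ q : ℤ, e k - e (k + q * n) ∈ tRel n := by
  intro q
  induction q using Int.induction_on with
  | zero => simpa using (tRel n).zero_mem
  | succ q ih =>
    have h2 := gen1 n (k + q * n)
    have h3 := add_mem ih h2
    have heq : (e k - e (k + q * n)) + (e (k + q * n) - e (k + q * n + n))
        = e k - e (k + (q + 1) * n) := by
      rw [show k + ((q : ℤ) + 1) * n = k + q * n + n by ring]; abel
    rwa [heq] at h3
  | pred q ih =>
    have h2 := neg_mem (gen1 n (k + (-q - 1) * n))
    have h3 := add_mem ih h2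
    have heq : (e k - e (k + (-q) * n)) + -(e (k + (-q - 1) * n) - e (k + (-q - 1) * n + n))
        = e k - e (k + (-q - 1) * n) := by
      rw [show k + (-(q : ℤ)) * n = k + (-q - 1) * n + n by ring]; abel
    rwa [heq] at h3

lemma mk_emod (n : ℕ) (k : ℤ) :
    (QuotientAddGroup.mk (e k) : T n) = QuotientAddGroup.mk (e (k % n)) := by
  apply mk_sub_mem
  rw [show k % (n : ℤ) = k + (-(k / n)) * n by rw [Int.emod_def]; ring]
  exact rel_shift n k _

lemma mk_neg (n : ℕ) (k : ℤ) :
    (QuotientAddGroup.mk (e (-k)) : T n) = QuotientAddGroup.mk (e k) := by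
  apply mk_sub_mem
  have := neg_mem (gen2 n k)
  rwa [neg_sub] at this

lemma mk_e_zero (n : ℕ) : (QuotientAddGroup.mk (e 0) : T n) = 0 :=
  (QuotientAddGroup.eq_zero_iff _).mpr (gen3 n)

lemma mk_sum (n : ℕ) :
    ∑ i ∈ Finset.range n, (QuotientAddGroup.mk (e (i : ℤ)) : T n) = 0 := by
  have h : ((QuotientAddGroup.mk (∑ i ∈ Finset.range n, e ((0 : ℤ) + i)) : T n)) = 0 :=
    (QuotientAddGroup.eq_zero_iff _).mpr (gen4 n 0)
  rw [show (∑ i ∈ Finset.range n, e ((0 : ℤ) + i)) = ∑ i ∈ Finset.range n, e (i : ℤ) from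
    Finset.sum_congr rfl fun i _ => by rw [zero_add]] at h
  rw [← h]
  exact (map_sum (QuotientAddGroup.mk' (tRel n)) _ _).symm

lemma mk_nat_symm (n : ℕ) (i : ℕ) (hi : i ≤ n) :
    (QuotientAddGroup.mk (e ((n - i : ℕ) : ℤ)) : T n) = QuotientAddGroup.mk (e (i : ℤ)) := by
  have h1 : (QuotientAddGroup.mk (e ((n - i : ℕ) : ℤ)) : T n)
      = QuotientAddGroup.mk (e (-(((n - i : ℕ)) : ℤ))) := (mk_neg n _).symm
  rw [h1, show (-(((n - i : ℕ)) : ℤ)) = (i : ℤ) - n by push_cast [hi]; ring,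
    mk_emod n ((i : ℤ) - n), mk_emod n (i : ℤ)]
  congr 1
  rw [show (i : ℤ) - n = (i : ℤ) + (-1) * n by ring, Int.add_mul_emod_self_right]

lemma mk_half (n : ℕ) (hn : 2 ≤ n) (he : n % 2 = 0) :
    (QuotientAddGroup.mk (e ((n / 2 : ℕ) : ℤ)) : T n)
      = (-2 : ℤ) • ∑ j : Fin (n / 2 - 1),
          (QuotientAddGroup.mk (e ((j : ℕ) + 1 : ℤ)) : T n) := by
  have hAeq : ∑ j : Fin (n / 2 - 1), (QuotientAddGroup.mk (e ((j : ℕ) + 1 : ℤ)) : T n)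
      = ∑ i ∈ Finset.Ico 1 (n / 2), (QuotientAddGroup.mk (e (i : ℤ)) : T n) := by
    rw [Finset.sum_Ico_eq_sum_range, ← Fin.sum_univ_eq_sum_range
      (fun i => (QuotientAddGroup.mk (e ((1 + i : ℕ) : ℤ)) : T n)) (n / 2 - 1)]
    refine Finset.sum_congr rfl fun j _ => ?_
    congr 1
    push_cast
    ring
  have h0 := (mk_sum n).symm
  rw [Finset.range_eq_Ico, ← Finset.sum_Ico_consecutive _ (by omega : 0 ≤ n / 2 + 1)
      (by omega : n / 2 + 1 ≤ n)] at h0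
  have hB : ∑ i ∈ Finset.Ico (n / 2 + 1) n, (QuotientAddGroup.mk (e (i : ℤ)) : T n)
      = ∑ i ∈ Finset.Ico 1 (n / 2), (QuotientAddGroup.mk (e (i : ℤ)) : T n) := by
    refine Finset.sum_nbij' (fun i => n - i) (fun i => n - i) ?_ ?_ ?_ ?_ ?_
    · intro a ha; simp only [Finset.mem_Ico] at *; omega
    · intro a ha; simp only [Finset.mem_Ico] at *; omega
    · intro a ha; simp only [Finset.mem_Ico] at ha; show n - (n - a) = a; omega
    · intro a ha; simp only [Finset.mem_Ico] at ha; show n - (n - a) = a; omega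
    · intro a ha
      simp only [Finset.mem_Ico] at ha
      exact (mk_nat_symm n a (by omega)).symm
  have hC : ∑ i ∈ Finset.Ico 0 (n / 2 + 1), (QuotientAddGroup.mk (e (i : ℤ)) : T n)
      = (QuotientAddGroup.mk (e ((0 : ℕ) : ℤ)) : T n)
        + (∑ i ∈ Finset.Ico 1 (n / 2), (QuotientAddGroup.mk (e (i : ℤ)) : T n)
          + (QuotientAddGroup.mk (e ((n / 2 : ℕ) : ℤ)) : T n)) := by
    rw [Finset.sum_eq_sum_Ico_succ_bot (by omega),
      Finset.sum_Ico_succ_top (by omega : 1 ≤ n / 2)]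
  rw [hB, hC] at h0
  have hz : (QuotientAddGroup.mk (e ((0 : ℕ) : ℤ)) : T n) = 0 := by
    rw [show ((0 : ℕ) : ℤ) = (0 : ℤ) by simp]
    exact mk_e_zero n
  rw [hz, zero_add] at h0
  rw [hAeq]
  have h3 : (QuotientAddGroup.mk (e ((n / 2 : ℕ) : ℤ)) : T n)
      + (2 : ℤ) • ∑ i ∈ Finset.Ico 1 (n / 2), (QuotientAddGroup.mk (e (i : ℤ)) : T n) = 0 := by
    rw [two_zsmul, h0]
    abel
  have h4 := eq_neg_of_add_eq_zero_left h3
  rwa [← neg_smul] at h4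

/-- The inverse map. -/
def psi (n : ℕ) : (Fin (n / 2 - 1) →₀ ℤ) →ₗ[ℤ] T n :=
  Finsupp.lift _ ℤ _ (fun j => QuotientAddGroup.mk (e ((j : ℕ) + 1 : ℤ)))

lemma psi_single (n : ℕ) (j : Fin (n / 2 - 1)) :
    psi n (Finsupp.single j 1) = QuotientAddGroup.mk (e ((j : ℕ) + 1 : ℤ)) := by
  rw [psi, Finsupp.lift_apply,
    Finsupp.sum_single_index (zero_smul ℤ (QuotientAddGroup.mk (e ((j : ℕ) + 1 : ℤ)) : T n))]
  exact one_smul ℤ _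

/-- The induced map on the quotient. -/
def phiBar (n : ℕ) (hn : 2 ≤ n) (he : n % 2 = 0) : T n →ₗ[ℤ] (Fin (n / 2 - 1) →₀ ℤ) :=
  (QuotientAddGroup.lift (tRel n) (phi n).toAddMonoidHom (tRel_le_ker n hn he)).toIntLinearMap

lemma phiBar_mk (n : ℕ) (hn : 2 ≤ n) (he : n % 2 = 0) (v : ℤ →₀ ℤ) :
    phiBar n hn he (QuotientAddGroup.mk v) = phi n v := rfl

lemma comp1 (n : ℕ) (hn : 2 ≤ n) (he : n % 2 = 0) :
    (phiBar n hn he).comp (psi n) = LinearMap.id := by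
  refine Finsupp.lhom_ext fun j b => ?_
  rw [show (Finsupp.single j b : Fin (n / 2 - 1) →₀ ℤ) = b • Finsupp.single j 1 by
    rw [Finsupp.smul_single, smul_eq_mul, mul_one]]
  rw [map_smul, map_smul]
  congr 1
  simp only [LinearMap.coe_comp, Function.comp_apply, LinearMap.id_coe, id_eq]
  rw [psi_single, phiBar_mk, phi_e]
  have hj := j.isLt
  have h1 : ((((j : ℕ) : ℤ) + 1) % n).toNat = (j : ℕ) + 1 := by
    rw [show (((j : ℕ) : ℤ) + 1) = ((((j : ℕ) + 1 : ℕ)) : ℤ) by push_cast; ring]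
    exact emod_self_toNat n hn _ (by omega)
  unfold fr
  rw [h1]
  unfold frN
  rw [dif_pos ⟨by omega, by omega⟩]
  congr 1 <;> exact Fin.ext (by simp)

lemma psi_fr (n : ℕ) (hn : 2 ≤ n) (he : n % 2 = 0) (k : ℤ) :
    psi n (fr n k) = (QuotientAddGroup.mk (e k) : T n) := by
  have h1 : 0 ≤ k % n := Int.emod_nonneg k (by positivity)
  have h2 : k % n < n := Int.emod_lt_of_pos k (by positivity)
  have hmk : (QuotientAddGroup.mk (e k) : T n)
      = QuotientAddGroup.mk (e (((k % n).toNat : ℕ) : ℤ)) := by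
    rw [mk_emod n k]
    congr 2
    omega
  rw [hmk]
  unfold fr frN
  set r := (k % n).toNat with hr
  have hrn : r < n := by omega
  split_ifs with a1 a2 a3
  · rw [psi_single]
    congr 2
    show ((r - 1 : ℕ) : ℤ) + 1 = ((r : ℕ) : ℤ)
    omega
  · rw [psi_single, ← mk_nat_symm n r (by omega)]
    congr 2
    show ((n - r - 1 : ℕ) : ℤ) + 1 = ((n - r : ℕ) : ℤ)
    omega
  · rw [map_smul, map_sum]
    simp only [psi_single]
    rw [← mk_half n hn he, a3]
  · have hr0 : r = 0 := by omega
    rw [map_zero, hr0]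
    rw [show ((0 : ℕ) : ℤ) = (0 : ℤ) from Nat.cast_zero]
    exact (mk_e_zero n).symm

lemma comp2 (n : ℕ) (hn : 2 ≤ n) (he : n % 2 = 0) :
    (psi n).comp (phiBar n hn he) = LinearMap.id := by
  apply LinearMap.ext
  intro x
  obtain ⟨v, rfl⟩ := QuotientAddGroup.mk_surjective x
  simp only [LinearMap.coe_comp, Function.comp_apply, LinearMap.id_coe, id_eq, phiBar_mk]
  induction v using Finsupp.induction_linear with
  | zero => rw [map_zero, map_zero]; exact (map_zero (QuotientAddGroup.mk' (tRel n))).symm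
  | add f g hf hg =>
    rw [map_add, map_add, hf, hg]
    exact (map_add (QuotientAddGroup.mk' (tRel n)) f g).symm
  | single a b =>
    rw [show (Finsupp.single a b : ℤ →₀ ℤ) = b • e a by
      rw [e, Finsupp.smul_single, smul_eq_mul, mul_one]]
    rw [map_smul, map_smul, phi_e, psi_fr n hn he a]
    exact (map_zsmul (QuotientAddGroup.mk' (tRel n)) b (e a)).symm

/-- The representation equivalence. -/
def equivT (n : ℕ) (hn : 2 ≤ n) (he : n % 2 = 0) : T n ≃ₗ[ℤ] (Fin (n / 2 - 1) →₀ ℤ) :=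
  LinearEquiv.ofLinear (phiBar n hn he) (psi n) (comp1 n hn he) (comp2 n hn he)

end StmtAux

theorem stmt10 (n : ℕ) (heven : Even n) (hn : 2 ≤ n) :
    ∃ b : Module.Basis (Fin (n / 2 - 1)) ℤ (T n),
      ∀ i : Fin (n / 2 - 1), b i = QuotientAddGroup.mk (e ((i : ℕ) + 1 : ℤ)) := by
  have he : n % 2 = 0 := Nat.even_iff.mp heven
  refine ⟨Module.Basis.ofRepr (StmtAux.equivT n hn he), fun i => ?_⟩
  rw [Module.Basis.coe_ofRepr]
  show (StmtAux.equivT n hn he).symm (Finsupp.single i 1) = _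
  rw [StmtAux.equivT, LinearEquiv.ofLinear_symm_apply]
  exact StmtAux.psi_single n i
end
end

section
/- For every even integer n ≥ 2, the image in Tₙ of the basis element [n/2] equals −2 times the image of the element [1] + [2] + ⋯ + [n/2 − 1]. -/
/-! Write `f k` for the class of `[k]` and `n = 2h`. The relation for the block `[1], …, [2h]`
splits it into `f 1 + ⋯ + f h` and `f (h+1) + ⋯ + f (2h)`; periodicity and evenness turn the
second half into `f (h-1) + ⋯ + f 0`, so `f h + 2 (f 1 + ⋯ + f (h-1)) = 0` since `f 0 = 0`. -/

noncomputable section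

open Finset

section PeriodicEven

variable {G : Type*} [AddCommGroup G] {f : ℤ → G} {h : ℕ}

theorem sum_range_upper_half_eq_sum_range (hper : Function.Periodic f (h + h))
    (heven : Function.Even f) :
    ∑ i ∈ range h, f (1 + ((h + i : ℕ) : ℤ)) = ∑ i ∈ range h, f (i : ℤ) := by
  rw [← sum_range_reflect (fun i : ℕ => f i) h]
  refine sum_congr rfl fun i hi => ?_
  have hi : i < h := mem_range.1 hi
  calc f (1 + ((h + i : ℕ) : ℤ)) = f (-((h - 1 - i : ℕ) : ℤ) + (h + h)) := by
        congr 1; omega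
    _ = f ((h - 1 - i : ℕ) : ℤ) := by rw [hper, heven]

theorem add_two_nsmul_sum_range_eq_zero (hper : Function.Periodic f (h + h))
    (heven : Function.Even f) (hzero : f 0 = 0)
    (hblock : ∑ i ∈ range (h + h), f (1 + (i : ℤ)) = 0) :
    f h + 2 • ∑ i ∈ range h, f (i : ℤ) = 0 := by
  have hshift : ∑ i ∈ range h, f (1 + (i : ℤ)) = ∑ i ∈ range h, f (i : ℤ) + f h := by
    have := sum_range_succ' (fun i : ℕ => f i) h
    rw [sum_range_succ] at this
    simpa [hzero, add_comm (1 : ℤ)] using this.symm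
  rw [sum_range_add, sum_range_upper_half_eq_sum_range hper heven, hshift] at hblock
  rw [← hblock, two_nsmul]
  abel

theorem sum_range_pred_succ_eq_sum_range (hzero : f 0 = 0) :
    ∑ i ∈ range (h - 1), f ((i : ℤ) + 1) = ∑ i ∈ range h, f (i : ℤ) := by
  cases h with
  | zero => simp
  | succ h => simp [sum_range_succ', hzero]

end PeriodicEven

section Relations

variable (n : ℕ)

def tClass (k : ℤ) : T n := QuotientAddGroup.mk (e k)

theorem tClass_periodic : Function.Periodic (tClass n) n := fun k =>
  Eq.symm <| QuotientAddGroup.eq_iff_sub_mem.2 <|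
    AddSubgroup.subset_closure (Or.inl <| Or.inl <| Or.inl ⟨k, rfl⟩)

theorem tClass_even : Function.Even (tClass n) := fun k =>
  Eq.symm <| QuotientAddGroup.eq_iff_sub_mem.2 <|
    AddSubgroup.subset_closure (Or.inl <| Or.inl <| Or.inr ⟨k, rfl⟩)

theorem tClass_zero : tClass n 0 = 0 :=
  (QuotientAddGroup.eq_zero_iff _).2 <|
    AddSubgroup.subset_closure (Or.inl <| Or.inr rfl)

theorem mk_sum_e (s : Finset ℕ) (g : ℕ → ℤ) :
    (QuotientAddGroup.mk (∑ i ∈ s, e (g i)) : T n) = ∑ i ∈ s, tClass n (g i) :=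
  map_sum (QuotientAddGroup.mk' (tRel n)) _ _

theorem sum_range_tClass_eq_zero (m : ℤ) : ∑ i ∈ range n, tClass n (m + i) = 0 := by
  rw [← mk_sum_e]
  exact (QuotientAddGroup.eq_zero_iff _).2 <| AddSubgroup.subset_closure (Or.inr ⟨m, rfl⟩)

end Relations

theorem stmt12_general (n : ℕ) (heven : Even n) :
    (QuotientAddGroup.mk (e ((n / 2 : ℕ) : ℤ)) : T n) =
      -(2 • (QuotientAddGroup.mk (∑ i ∈ Finset.range (n / 2 - 1), e ((i : ℤ) + 1)) : T n)) := by
  obtain ⟨h, rfl⟩ := heven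
  have hhalf : (h + h) / 2 = h := by omega
  have hper : Function.Periodic (tClass (h + h)) (h + h) := by
    simpa using tClass_periodic (h + h)
  rw [hhalf, mk_sum_e, sum_range_pred_succ_eq_sum_range (tClass_zero _)]
  exact eq_neg_of_add_eq_zero_left <| add_two_nsmul_sum_range_eq_zero hper (tClass_even _)
    (tClass_zero _) (sum_range_tClass_eq_zero _ 1)

theorem stmt12 (n : ℕ) (heven : Even n) (hn : 2 ≤ n) :
    (QuotientAddGroup.mk (e ((n / 2 : ℕ) : ℤ)) : T n) =
      -(2 • (QuotientAddGroup.mk (∑ i ∈ Finset.range (n / 2 - 1), e ((i : ℤ) + 1)) : T n)) :=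
  stmt12_general n heven
end
end
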